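/- Suppose the integer variables w_{cd} ∈ ℤ^dim, b_{cd} ∈ ℤ (for c ∈ [C], d ∈ [D]), z_{ncd} ∈ {0,1} and yOr_{nc} ∈ {0,1} (for n ∈ [N]) form a feasible solution of the ILP constraints (Eq. 2), (Eq. 3) and (Eq. 4). Then for every n ∈ [N] one has y_n = 1 if and only if ⋀_{c∈[C]} ⋁_{d∈[D]} (⟨w_{cd}, σ_n⟩ + b_{cd} > 0). In particular, the predicate h(x) = ⋀_{c∈[C]} ⋁_{d∈[D]} (⟨w_{cd}, x⟩ + b_{cd} > 0) is a member of H_CNF that correctly classifies all N labeled program states. -/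
import Mathlib


/-- Any feasible solution of the ILP constraints (Eq. 2), (Eq. 3), (Eq. 4)
defines a CNF predicate that correctly classifies all N labeled program states. -/
theorem ilp_feasible_solution_classifies
    (N dim C D : ℕ) (M : ℤ)
    (σ : Fin N → Fin dim → ℤ) (y : Fin N → ℤ)
    (hy : ∀ n, y n = 0 ∨ y n = 1)
    (w : Fin C → Fin D → Fin dim → ℤ) (b : Fin C → Fin D → ℤ)
    (z : Fin N → Fin C → Fin D → ℤ)
    (hz : ∀ n c d, z n c d = 0 ∨ z n c d = 1)
    (yOr : Fin N → Fin C → ℤ)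
    (hyOr : ∀ n c, yOr n c = 0 ∨ yOr n c = 1)
    (hEq2 : ∀ n c d,
      -M * (1 - z n c d) < (∑ i, w c d i * σ n i) + b c d ∧
      (∑ i, w c d i * σ n i) + b c d ≤ M * z n c d)
    (hEq3 : ∀ n c,
      -M * (1 - yOr n c) < (∑ d, z n c d) ∧
      (∑ d, z n c d) ≤ M * yOr n c)
    (hEq4 : ∀ n, (y n = 1 → (∑ c, yOr n c) ≥ (C : ℤ)) ∧
                 (y n = 0 → (∑ c, yOr n c) ≤ (C : ℤ) - 1)) :
    ∀ n, y n = 1 ↔ (∀ c, ∃ d, (∑ i, w c d i * σ n i) + b c d > 0) := by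
  intro n
  -- z = 1 iff the linear form is positive
  have hz01 : ∀ c d, z n c d = 1 ↔ (∑ i, w c d i * σ n i) + b c d > 0 := by
    intro c d
    rcases hz n c d with h | h
    · constructor
      · intro h1; rw [h] at h1; exact absurd h1 (by norm_num)
      · intro hp
        exfalso
        have h2 := (hEq2 n c d).2
        rw [h] at h2
        simp at h2
        linarith
    · constructor
      · intro _
        have h1 := (hEq2 n c d).1
        rw [h] at h1
        simp at h1
        linarith
      · intro _; exact h
  -- yOr = 1 iff some z = 1
  have hyOr1 : ∀ c, yOr n c = 1 ↔ ∃ d, z n c d = 1 := by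
    intro c
    constructor
    · intro h1
      by_contra hcon
      push_neg at hcon
      have hall : ∀ d, z n c d = 0 := fun d => (hz n c d).resolve_right (hcon d)
      have hsum : (∑ d, z n c d) = 0 := Finset.sum_eq_zero (fun d _ => hall d)
      have h3 := (hEq3 n c).1
      rw [h1, hsum] at h3
      simp at h3
    · rintro ⟨d0, hd0⟩
      rcases hyOr n c with h | h
      · exfalso
        have h3 := (hEq3 n c).2
        rw [h] at h3
        simp at h3
        have hpos : (1 : ℤ) ≤ ∑ d, z n c d := by
          have h1 : z n c d0 ≤ ∑ d, z n c d :=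
            Finset.single_le_sum (f := fun d => z n c d)
              (fun d _ => show (0:ℤ) ≤ z n c d by rcases hz n c d with h'|h' <;> omega)
              (Finset.mem_univ d0)
          omega
        linarith
      · exact h
  constructor
  · intro hy1 c
    have hsum := (hEq4 n).1 hy1
    have hall : ∀ c, yOr n c = 1 := by
      by_contra hcon
      push_neg at hcon
      obtain ⟨c0, hc0⟩ := hcon
      have h0 : yOr n c0 = 0 := (hyOr n c0).resolve_right hc0
      have hlt : (∑ c, yOr n c) < ∑ _c : Fin C, (1 : ℤ) := by
        apply Finset.sum_lt_sum
        · intro c _; rcases hyOr n c with h|h <;> omega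
        · exact ⟨c0, Finset.mem_univ c0, by omega⟩
      simp at hlt
      omega
    obtain ⟨d0, hd0⟩ := (hyOr1 c).mp (hall c)
    exact ⟨d0, (hz01 c d0).mp hd0⟩
  · intro hpos
    have hall : ∀ c, yOr n c = 1 := by
      intro c
      obtain ⟨d0, hd0⟩ := hpos c
      exact (hyOr1 c).mpr ⟨d0, (hz01 c d0).mpr hd0⟩
    have hsum : (∑ c, yOr n c) = C := by
      rw [Finset.sum_congr rfl (fun c _ => hall c)]
      simp
    rcases hy n with h | h
    · exfalso
      have := (hEq4 n).2 h
      omega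
    · exact h
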